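/- For m = 2p even, the dihedral Artin group G(m) = ⟨a, b | π_m(a,b) = π_m(b,a)⟩ is isomorphic to the Baumslag–Solitar group BS(p,p) = ⟨x, y | y^{-1} x^p y = x^p⟩, via x = ab and y = a. -/

import Mathlib

/-- The alternating product `altProd a b n = a b a b ⋯` of length `n`. -/
def altProd {G : Type*} [Monoid G] : G → G → ℕ → G
  | _, _, 0 => 1
  | a, b, n + 1 => a * altProd b a n

/-- The Artin relation π_m(a,b) = π_m(b,a) for the dihedral Artin group G(m);
`true` is the generator a and `false` is the generator b. -/
def artinRels (m : ℕ) : Set (FreeGroup Bool) :=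
  {altProd (FreeGroup.of true) (FreeGroup.of false) m *
    (altProd (FreeGroup.of false) (FreeGroup.of true) m)⁻¹}

/-- The Baumslag–Solitar relation y⁻¹xᵖy = xᵖ for BS(p,p);
`true` is the generator x and `false` is the generator y. -/
def bsRels (p : ℕ) : Set (FreeGroup Bool) :=
  {(FreeGroup.of false)⁻¹ * FreeGroup.of true ^ p * FreeGroup.of false *
    (FreeGroup.of true ^ p)⁻¹}

lemma altProd_two_mul {G : Type*} [Monoid G] (a b : G) (n : ℕ) :
    altProd a b (2 * n) = (a * b) ^ n := by
  induction n with
  | zero => simp [altProd]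
  | succ k ih =>
      have : 2 * (k + 1) = (2 * k) + 1 + 1 := by ring
      rw [this, altProd, altProd, ih, pow_succ']
      group

lemma map_altProd {G H : Type*} [Monoid G] [Monoid H] (φ : G →* H) (a b : G) (n : ℕ) :
    φ (altProd a b n) = altProd (φ a) (φ b) n := by
  induction n generalizing a b with
  | zero => simp [altProd]
  | succ k ih => rw [altProd, altProd, map_mul, ih]

lemma rel_one {α : Type*} {rels : Set (FreeGroup α)} {r : FreeGroup α} (hr : r ∈ rels) :
    PresentedGroup.mk rels r = 1 :=
  (QuotientGroup.eq_one_iff _).mpr (Subgroup.subset_normalClosure hr)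

lemma my_conj_pow {G : Type*} [Group G] (g h : G) : ∀ n : ℕ,
    (g⁻¹ * h * g) ^ n = g⁻¹ * h ^ n * g
  | 0 => by group
  | n + 1 => by rw [pow_succ, my_conj_pow g h n, pow_succ]; group

/-- for m = 2p even, the dihedral Artin group G(m) is isomorphic to
BS(p,p) = ⟨x,y | y⁻¹xᵖy = xᵖ⟩ via x ↦ ab and y ↦ a. -/
theorem stmt10 (p : ℕ) (hp : 2 ≤ p) :
    ∃ φ : PresentedGroup (bsRels p) ≃* PresentedGroup (artinRels (2 * p)),
      φ (PresentedGroup.of true) =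
        PresentedGroup.of true * PresentedGroup.of false ∧
      φ (PresentedGroup.of false) = PresentedGroup.of true := by
  classical
  set A := PresentedGroup (artinRels (2 * p)) with hA
  set B := PresentedGroup (bsRels p) with hB
  set a : A := PresentedGroup.of true with ha
  set b : A := PresentedGroup.of false with hb
  set x : B := PresentedGroup.of true with hx
  set y : B := PresentedGroup.of false with hy
  -- the Artin relation in A : (a*b)^p = (b*a)^p
  have hArel : (a * b) ^ p = (b * a) ^ p := by
    have h1 : PresentedGroup.mk (artinRels (2 * p))
        (altProd (FreeGroup.of true) (FreeGroup.of false) (2 * p) *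
          (altProd (FreeGroup.of false) (FreeGroup.of true) (2 * p))⁻¹) = 1 :=
      rel_one rfl
    rw [map_mul, map_inv, map_altProd, map_altProd, altProd_two_mul, altProd_two_mul,
      mul_inv_eq_one] at h1
    exact h1
  -- the BS relation in B : y⁻¹ * x^p * y = x^p
  have hBrel : y⁻¹ * x ^ p * y = x ^ p := by
    have h1 : PresentedGroup.mk (bsRels p)
        ((FreeGroup.of false)⁻¹ * FreeGroup.of true ^ p * FreeGroup.of false *
          (FreeGroup.of true ^ p)⁻¹) = 1 := rel_one rfl
    rw [map_mul, map_inv, mul_inv_eq_one] at h1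
    exact h1
  -- map B → A
  have hfA : ∀ r ∈ bsRels p,
      FreeGroup.lift (fun t : Bool => if t then a * b else a) r = 1 := by
    rintro r rfl
    simp only [map_mul, map_inv, map_pow, FreeGroup.lift_apply_of, if_true, if_false]
    rw [mul_inv_eq_one]
    calc a⁻¹ * (a * b) ^ p * a = (a⁻¹ * (a * b) * a) ^ p := (my_conj_pow a _ p).symm
      _ = (b * a) ^ p := by group
      _ = (a * b) ^ p := hArel.symm
  -- map A → B
  have hfB : ∀ r ∈ artinRels (2 * p),
      FreeGroup.lift (fun t : Bool => if t then y else y⁻¹ * x) r = 1 := by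
    rintro r rfl
    simp only [map_mul, map_inv, map_pow, map_altProd, FreeGroup.lift_apply_of, if_true, if_false,
      altProd_two_mul]
    rw [mul_inv_eq_one]
    calc (y * (y⁻¹ * x)) ^ p = x ^ p := by group
      _ = y⁻¹ * x ^ p * y := hBrel.symm
      _ = (y⁻¹ * x * y) ^ p := (my_conj_pow y x p).symm
  set F : B →* A := PresentedGroup.toGroup hfA with hF
  set G : A →* B := PresentedGroup.toGroup hfB with hG
  have hFof : ∀ t : Bool, F (PresentedGroup.of t) = if t then a * b else a := fun t =>
    PresentedGroup.toGroup.of hfA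
  have hGof : ∀ t : Bool, G (PresentedGroup.of t) = if t then y else y⁻¹ * x := fun t =>
    PresentedGroup.toGroup.of hfB
  have hGF : G.comp F = MonoidHom.id B := by
    ext t
    cases t <;>
      (simp [hFof, hGof, ha, hb, hx, hy]; rfl)
  have hFG : F.comp G = MonoidHom.id A := by
    ext t
    cases t <;>
      (simp [hFof, hGof, ha, hb, hx, hy]; rfl)
  refine ⟨MonoidHom.toMulEquiv F G hGF hFG, ?_, ?_⟩
  · show F (PresentedGroup.of true) = _
    rw [hFof]; simp [ha, hb]
  · show F (PresentedGroup.of false) = _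
    rw [hFof]; simp [ha]
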